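/- arXiv:1302.5321 — 3 statements merged into one kernel-verified Lean document; each statement's English description precedes it below -/
import Mathlib

section
/- Let a, b, x₀ be real numbers with a > b > 0, and define f : ℝ → ℝ by f(x) = √(a² + x²) − √(b² + x²) − x·[arsinh(x/a) − arsinh(x/b) − arsinh(x₀/a) + arsinh(x₀/b)]. Then for every real x one has f(x) ≥ √(a² + x₀²) − √(b² + x₀²), and equality holds if and only if x = x₀. (This is the key pointwise lemma in the proof of the comparison theorem for quasi-local energy, with a = |H_{τ₀}|, b = |H|, x = Δτ/√(1+|∇τ|²), x₀ = Δτ₀/√(1+|∇τ₀|²).) -/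
/-!
Write `h t = arsinh (t / a) - arsinh (t / b)` and `φ_c x = √(c² + x²) - x · arsinh (x / c)`.
Then `f = φ_a - φ_b + x · h x₀`, and since `φ_c' x = -arsinh (x / c)` we get
`f' x = h x₀ - h x`. As `h' t = 1/√(a² + t²) - 1/√(b² + t²) < 0` for `a > b > 0`, `h` is strictly
decreasing, so `f` strictly decreases up to `x₀` and strictly increases after it.
-/

open Real Set

lemma lt_of_hasDerivAt_neg_of_pos {f f' : ℝ → ℝ} {x₀ : ℝ} (hf : ∀ x, HasDerivAt f (f' x) x)
    (hneg : ∀ x < x₀, f' x < 0) (hpos : ∀ x, x₀ < x → 0 < f' x) {x : ℝ} (hx : x ≠ x₀) :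
    f x₀ < f x := by
  have hcont : Continuous f := continuous_iff_continuousAt.2 fun x => (hf x).continuousAt
  rcases hx.lt_or_gt with hlt | hgt
  · refine strictAntiOn_of_hasDerivWithinAt_neg (convex_Iic x₀) hcont.continuousOn
      (fun t _ => (hf t).hasDerivWithinAt) (fun t ht => hneg t ?_) hlt.le self_mem_Iic hlt
    simpa using ht
  · refine strictMonoOn_of_hasDerivWithinAt_pos (convex_Ici x₀) hcont.continuousOn
      (fun t _ => (hf t).hasDerivWithinAt) (fun t ht => hpos t ?_) self_mem_Ici hgt.le hgt
    simpa using ht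

lemma hasDerivAt_sqrt_sq_add_sq {c : ℝ} (hc : c ≠ 0) (x : ℝ) :
    HasDerivAt (fun x => √(c ^ 2 + x ^ 2)) (x / √(c ^ 2 + x ^ 2)) x := by
  have hpos : 0 < c ^ 2 + x ^ 2 := by positivity
  convert ((hasDerivAt_pow 2 x).const_add (c ^ 2)).sqrt hpos.ne' using 1
  field_simp
  ring

lemma hasDerivAt_arsinh_div {c : ℝ} (hc : 0 < c) (x : ℝ) :
    HasDerivAt (fun x => arsinh (x / c)) (√(c ^ 2 + x ^ 2))⁻¹ x := by
  convert ((hasDerivAt_id' x).div_const c).arsinh using 1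
  have hsq : 1 + (x / c) ^ 2 = (c ^ 2 + x ^ 2) / c ^ 2 := by field_simp
  rw [hsq, sqrt_div' _ (sq_nonneg c), sqrt_sq hc.le, smul_eq_mul]
  field_simp

lemma hasDerivAt_sqrt_sq_add_sq_sub_mul_arsinh_div {c : ℝ} (hc : 0 < c) (x : ℝ) :
    HasDerivAt (fun x => √(c ^ 2 + x ^ 2) - x * arsinh (x / c)) (-arsinh (x / c)) x := by
  refine ((hasDerivAt_sqrt_sq_add_sq hc.ne' x).sub
    ((hasDerivAt_id' x).mul (hasDerivAt_arsinh_div hc x))).congr_deriv ?_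
  ring

lemma strictAnti_arsinh_div_sub_arsinh_div {a b : ℝ} (hab : b < a) (hb : 0 < b) :
    StrictAnti fun t => arsinh (t / a) - arsinh (t / b) := by
  refine strictAnti_of_hasDerivAt_neg
    (fun t => (hasDerivAt_arsinh_div (hb.trans hab) t).sub (hasDerivAt_arsinh_div hb t))
    fun t => sub_neg.2 (inv_strictAnti₀ (by positivity) (sqrt_lt_sqrt (by positivity) ?_))
  nlinarith

/-- Key pointwise lemma: for `a > b > 0`, the function
`f(x) = √(a² + x²) − √(b² + x²)
        − x·[arsinh(x/a) − arsinh(x/b) − arsinh(x₀/a) + arsinh(x₀/b)]`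
attains its global minimum `√(a² + x₀²) − √(b² + x₀²)` exactly at `x = x₀`. -/
theorem stmt_0 (a b x₀ : ℝ) (hab : a > b) (hb : b > 0)
    (f : ℝ → ℝ)
    (hf : ∀ x, f x =
      Real.sqrt (a ^ 2 + x ^ 2) - Real.sqrt (b ^ 2 + x ^ 2) -
        x * (Real.arsinh (x / a) - Real.arsinh (x / b)
              - Real.arsinh (x₀ / a) + Real.arsinh (x₀ / b))) :
    ∀ x : ℝ,
      Real.sqrt (a ^ 2 + x₀ ^ 2) - Real.sqrt (b ^ 2 + x₀ ^ 2) ≤ f x ∧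
      (f x = Real.sqrt (a ^ 2 + x₀ ^ 2) - Real.sqrt (b ^ 2 + x₀ ^ 2) ↔ x = x₀) := by
  set h : ℝ → ℝ := fun t => arsinh (t / a) - arsinh (t / b)
  have hanti : StrictAnti h := strictAnti_arsinh_div_sub_arsinh_div hab hb
  have hf_eq : f = fun x => (√(a ^ 2 + x ^ 2) - x * arsinh (x / a))
      - (√(b ^ 2 + x ^ 2) - x * arsinh (x / b)) + x * h x₀ := by
    funext x
    rw [hf]
    ring
  have hderiv : ∀ x, HasDerivAt f (h x₀ - h x) x := fun x => by
    rw [hf_eq]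
    refine (((hasDerivAt_sqrt_sq_add_sq_sub_mul_arsinh_div (hb.trans hab) x).sub
      (hasDerivAt_sqrt_sq_add_sq_sub_mul_arsinh_div hb x)).add
      ((hasDerivAt_id' x).mul_const (h x₀))).congr_deriv ?_
    ring
  have hmin : ∀ x, x ≠ x₀ → f x₀ < f x := fun x =>
    lt_of_hasDerivAt_neg_of_pos hderiv (fun t ht => sub_neg.2 (hanti ht))
      fun t ht => sub_pos.2 (hanti ht)
  have hf₀ : f x₀ = √(a ^ 2 + x₀ ^ 2) - √(b ^ 2 + x₀ ^ 2) := by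
    rw [hf]
    ring
  intro x
  rw [← hf₀]
  rcases eq_or_ne x x₀ with rfl | hne
  · simp
  · exact ⟨(hmin x hne).le, iff_of_false (hmin x hne).ne' hne⟩
end

section
/- Let h, g, L be real numbers with h > 0 and g ≥ 0, and define φ : ℝ → ℝ by φ(s) = √((1 + s²g)·h² + s²L²) − s·L·arsinh( sL / (h·√(1 + s²g)) ). Then for every s > 0, φ is differentiable at s and φ′(s) = φ(s)/s − (1/(s·√(1 + s²g)))·√( h² + s²L² / (1 + s²g) ). -/
/-!
Write `A = 1 + s²g`, `Q = √(A h² + s² L²)` and `w = s L / (h √A)`, so that `φ = Q - s L arsinh w`.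
Since `1 + w² = Q² / (h² A)`, the derivative of `arsinh w` collapses to `L / (A Q)`, and then
`φ' - φ / s = Q' - Q / s - s L² / (A Q) = -Q / (s A)`, which is the claimed correction term
because `√(h² + s² L² / A) = Q / √A`.
-/

open Real

section

variable {a b h g L s : ℝ}

lemma sqrt_one_add_sq_div_mul_sqrt (hh : 0 < h) (ha : 0 < a) (y : ℝ) :
    √(1 + (y / (h * √a)) ^ 2) = √(a * h ^ 2 + y ^ 2) / (h * √a) := by
  have hq : 0 < h * √a := by positivity
  have : 1 + (y / (h * √a)) ^ 2 = (a * h ^ 2 + y ^ 2) / (h * √a) ^ 2 := by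
    field_simp
    rw [sq_sqrt ha.le]
  rw [this, sqrt_div' _ (sq_nonneg _), sqrt_sq hq.le]

lemma sqrt_add_div (ha : 0 < a) (c y : ℝ) : √(c + y / a) = √(a * c + y) / √a := by
  rw [← sqrt_div' _ ha.le]
  congr 1
  field_simp

lemma hasDerivAt_sqrt_add_sq_mul (hpos : 0 < a + s ^ 2 * b) :
    HasDerivAt (fun x => √(a + x ^ 2 * b)) (s * b / √(a + s ^ 2 * b)) s := by
  have hd : HasDerivAt (fun x => a + x ^ 2 * b) (2 * s * b) s :=
    (((hasDerivAt_pow 2 s).mul_const b).const_add a).congr_deriv (by norm_num)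
  convert hd.sqrt hpos.ne' using 1
  field_simp

lemma hasDerivAt_arsinh_mul_div_mul_sqrt (hh : 0 < h) (hA : 0 < 1 + s ^ 2 * g) :
    HasDerivAt (fun x => arsinh (x * L / (h * √(1 + x ^ 2 * g))))
      (L / ((1 + s ^ 2 * g) * √((1 + s ^ 2 * g) * h ^ 2 + s ^ 2 * L ^ 2))) s := by
  have hw : HasDerivAt (fun x => x * L / (h * √(1 + x ^ 2 * g))) _ s :=
    ((hasDerivAt_id' s).mul_const L).div
      ((hasDerivAt_sqrt_add_sq_mul hA).const_mul h) (by positivity)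
  convert hw.arsinh using 1
  rw [sqrt_one_add_sq_div_mul_sqrt hh hA, mul_pow, smul_eq_mul]
  field_simp
  rw [sq_sqrt hA.le]
  ring

end

/-- Differentiation identity for the quasi-local energy integrand: for
`h > 0`, `g ≥ 0`, and
`φ(s) = √((1 + s²g)h² + s²L²) − sL·arsinh(sL/(h√(1 + s²g)))`,
one has, for every `s > 0`,
`φ′(s) = φ(s)/s − (1/(s√(1 + s²g)))·√(h² + s²L²/(1 + s²g))`. -/
theorem stmt_8 (h g L : ℝ) (hh : h > 0) (hg : g ≥ 0)
    (φ : ℝ → ℝ)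
    (hφ : ∀ s, φ s =
      Real.sqrt ((1 + s ^ 2 * g) * h ^ 2 + s ^ 2 * L ^ 2) -
        s * L * Real.arsinh (s * L / (h * Real.sqrt (1 + s ^ 2 * g)))) :
    ∀ s : ℝ, 0 < s →
      HasDerivAt φ
        (φ s / s -
          (1 / (s * Real.sqrt (1 + s ^ 2 * g))) *
            Real.sqrt (h ^ 2 + s ^ 2 * L ^ 2 / (1 + s ^ 2 * g))) s := by
  obtain rfl : φ = fun s => √((1 + s ^ 2 * g) * h ^ 2 + s ^ 2 * L ^ 2) -
      s * L * arsinh (s * L / (h * √(1 + s ^ 2 * g))) := funext hφ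
  intro s hs
  have hA : 0 < 1 + s ^ 2 * g := by positivity
  have hQ : 0 < (1 + s ^ 2 * g) * h ^ 2 + s ^ 2 * L ^ 2 := by positivity
  have hQ_rad (x : ℝ) :
      (1 + x ^ 2 * g) * h ^ 2 + x ^ 2 * L ^ 2 = h ^ 2 + x ^ 2 * (g * h ^ 2 + L ^ 2) := by
    ring
  have hdQ : HasDerivAt (fun x => √((1 + x ^ 2 * g) * h ^ 2 + x ^ 2 * L ^ 2))
      (s * (g * h ^ 2 + L ^ 2) / √((1 + s ^ 2 * g) * h ^ 2 + s ^ 2 * L ^ 2)) s := by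
    simp only [hQ_rad] at hQ ⊢
    exact hasDerivAt_sqrt_add_sq_mul hQ
  refine (hdQ.sub (((hasDerivAt_id' s).mul_const L).mul
    (hasDerivAt_arsinh_mul_div_mul_sqrt hh hA))).congr_deriv ?_
  beta_reduce
  rw [sqrt_add_div hA]
  have hQsq := sq_sqrt hQ.le
  have hQpos := sqrt_pos.2 hQ
  generalize √((1 + s ^ 2 * g) * h ^ 2 + s ^ 2 * L ^ 2) = Q at hQsq hQpos ⊢
  field_simp
  rw [sq_sqrt hA.le]
  linear_combination -(1 + s ^ 2 * g) * s ^ 2 * g * hQsq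
end

section
/- Let I ⊆ ℝ be an open interval, let m : I → ℝ be a positive function, let ρ : I → ℝ be differentiable, and for any twice differentiable function w : I → ℝ define Δw := (ρ·w′)′ / m. Let v, τ, ṽ : I → ℝ be twice differentiable functions such that v′(θ)² + τ′(θ)² > 0 and ṽ′(θ) = √(v′(θ)² + τ′(θ)²) for all θ ∈ I. Then for all θ ∈ I: (i) Δṽ = (v′·Δv + τ′·Δτ)/√(v′² + τ′²), and (ii) (Δv)² + (Δτ)² − (Δṽ)² = (v′·Δτ − τ′·Δv)²/(v′² + τ′²); in particular (Δṽ)² ≤ (Δv)² + (Δτ)². -/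
/-!
Write `s = √(v′² + τ′²)`. The product rule gives `(ρ ṽ′)′ = ρ′ s + ρ (v′v″ + τ′τ″) / s`, and since
`ρ′ s = ρ′ (v′² + τ′²) / s` this equals `(v′ (ρ v′)′ + τ′ (ρ τ′)′) / s`; dividing by `m` gives (i).
Identity (ii) is then Lagrange's identity `(x² + y²)(a² + b²) - (a x + b y)² = (a y - b x)²`
with `(x, y) = (Δv, Δτ)` and `(a, b) = (v′, τ′)`.
-/

open Filter Topology

noncomputable def sturmLiouville (ρ m w : ℝ → ℝ) (θ : ℝ) : ℝ :=
  deriv (fun t => ρ t * deriv w t) θ / m θ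

theorem sq_add_sq_sub_div_sqrt_sq {a b : ℝ} (hab : 0 < a ^ 2 + b ^ 2) (x y : ℝ) :
    x ^ 2 + y ^ 2 - ((a * x + b * y) / √(a ^ 2 + b ^ 2)) ^ 2 =
      (a * y - b * x) ^ 2 / (a ^ 2 + b ^ 2) := by
  rw [div_pow, Real.sq_sqrt hab.le]
  field_simp
  ring

theorem hasDerivAt_sqrt_sq_add_sq_s9 {f g : ℝ → ℝ} {f' g' θ : ℝ} (hf : HasDerivAt f f' θ)
    (hg : HasDerivAt g g' θ) (hpos : 0 < f θ ^ 2 + g θ ^ 2) :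
    HasDerivAt (fun t => √(f t ^ 2 + g t ^ 2))
      ((f θ * f' + g θ * g') / √(f θ ^ 2 + g θ ^ 2)) θ := by
  have hsum : HasDerivAt (fun t => f t ^ 2 + g t ^ 2) (2 * (f θ * f' + g θ * g')) θ :=
    ((hf.fun_pow 2).fun_add (hg.fun_pow 2)).congr_deriv (by norm_num; ring)
  convert hsum.sqrt hpos.ne' using 1
  field_simp

theorem sturmLiouville_eq {ρ m w : ℝ → ℝ} {θ ρ' w'' : ℝ} (hρ : HasDerivAt ρ ρ' θ)
    (hw : HasDerivAt (deriv w) w'' θ) :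
    sturmLiouville ρ m w θ = (ρ' * deriv w θ + ρ θ * w'') / m θ := by
  have hprod : HasDerivAt (fun t => ρ t * deriv w t) (ρ' * deriv w θ + ρ θ * w'') θ := hρ.mul hw
  rw [sturmLiouville, hprod.deriv]

theorem sturmLiouville_of_deriv_eq_sqrt {ρ m v τ vtil : ℝ → ℝ} {θ : ℝ}
    (hρ : DifferentiableAt ℝ ρ θ) (hv : DifferentiableAt ℝ (deriv v) θ)
    (hτ : DifferentiableAt ℝ (deriv τ) θ) (hpos : 0 < deriv v θ ^ 2 + deriv τ θ ^ 2)
    (hslope : deriv vtil =ᶠ[𝓝 θ] fun t => √(deriv v t ^ 2 + deriv τ t ^ 2)) :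
    sturmLiouville ρ m vtil θ =
      (deriv v θ * sturmLiouville ρ m v θ + deriv τ θ * sturmLiouville ρ m τ θ) /
        √(deriv v θ ^ 2 + deriv τ θ ^ 2) := by
  have hs := (hasDerivAt_sqrt_sq_add_sq_s9 hv.hasDerivAt hτ.hasDerivAt hpos).congr_of_eventuallyEq
    hslope
  rw [sturmLiouville_eq hρ.hasDerivAt hs, hslope.eq_of_nhds,
    sturmLiouville_eq hρ.hasDerivAt hv.hasDerivAt, sturmLiouville_eq hρ.hasDerivAt hτ.hasDerivAt]
  field_simp
  rw [Real.sq_sqrt hpos.le]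
  ring

theorem stmt_9_general (α β : ℝ) (I : Set ℝ) (hI : I = Set.Ioo α β)
    (m ρ : ℝ → ℝ)
    (hρ : ∀ θ ∈ I, DifferentiableAt ℝ ρ θ)
    (v τ vtil : ℝ → ℝ)
    (hv : ∀ θ ∈ I, DifferentiableAt ℝ v θ ∧ DifferentiableAt ℝ (deriv v) θ)
    (hτ : ∀ θ ∈ I, DifferentiableAt ℝ τ θ ∧ DifferentiableAt ℝ (deriv τ) θ)
    (hpos : ∀ θ ∈ I, 0 < (deriv v θ) ^ 2 + (deriv τ θ) ^ 2)
    (hslope : ∀ θ ∈ I, deriv vtil θ = Real.sqrt ((deriv v θ) ^ 2 + (deriv τ θ) ^ 2))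
    (Lap : (ℝ → ℝ) → ℝ → ℝ)
    (hLap : ∀ w : ℝ → ℝ, ∀ θ : ℝ,
      Lap w θ = deriv (fun t => ρ t * deriv w t) θ / m θ) :
    ∀ θ ∈ I,
      Lap vtil θ =
          (deriv v θ * Lap v θ + deriv τ θ * Lap τ θ) /
            Real.sqrt ((deriv v θ) ^ 2 + (deriv τ θ) ^ 2) ∧
        (Lap v θ) ^ 2 + (Lap τ θ) ^ 2 - (Lap vtil θ) ^ 2 =
          (deriv v θ * Lap τ θ - deriv τ θ * Lap v θ) ^ 2 /
            ((deriv v θ) ^ 2 + (deriv τ θ) ^ 2) ∧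
        (Lap vtil θ) ^ 2 ≤ (Lap v θ) ^ 2 + (Lap τ θ) ^ 2 := by
  obtain rfl : Lap = sturmLiouville ρ m := funext₂ hLap
  subst hI
  intro θ hθ
  have hslope_nhds : deriv vtil =ᶠ[𝓝 θ] fun t => √(deriv v t ^ 2 + deriv τ t ^ 2) :=
    eventually_of_mem (isOpen_Ioo.mem_nhds hθ) hslope
  have hΔ := sturmLiouville_of_deriv_eq_sqrt (m := m) (hρ θ hθ) (hv θ hθ).2 (hτ θ hθ).2 (hpos θ hθ)
    hslope_nhds
  have hlagrange := hΔ ▸ sq_add_sq_sub_div_sqrt_sq (hpos θ hθ) (sturmLiouville ρ m v θ)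
    (sturmLiouville ρ m τ θ)
  refine ⟨hΔ, hlagrange, sub_nonneg.mp ?_⟩
  rw [hlagrange]
  positivity

/-- Sturm–Liouville identity for axially symmetric mean curvatures
(analytic core of Lemma 4.3): with `Δw := (ρ·w′)′/m` on the open interval `I`,
if `vtil′ = √(v′² + τ′²)` and `v′² + τ′² > 0` on `I`, then on `I`:
(i) `Δvtil = (v′·Δv + τ′·Δτ)/√(v′² + τ′²)`, and
(ii) `(Δv)² + (Δτ)² − (Δvtil)² = (v′·Δτ − τ′·Δv)²/(v′² + τ′²)`;
in particular `(Δvtil)² ≤ (Δv)² + (Δτ)²`. -/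
theorem stmt_9 (α β : ℝ) (I : Set ℝ) (hI : I = Set.Ioo α β)
    (m ρ : ℝ → ℝ)
    (hm : ∀ θ ∈ I, 0 < m θ)
    (hρ : ∀ θ ∈ I, DifferentiableAt ℝ ρ θ)
    (v τ vtil : ℝ → ℝ)
    (hv : ∀ θ ∈ I, DifferentiableAt ℝ v θ ∧ DifferentiableAt ℝ (deriv v) θ)
    (hτ : ∀ θ ∈ I, DifferentiableAt ℝ τ θ ∧ DifferentiableAt ℝ (deriv τ) θ)
    (hvtil : ∀ θ ∈ I, DifferentiableAt ℝ vtil θ ∧ DifferentiableAt ℝ (deriv vtil) θ)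
    (hpos : ∀ θ ∈ I, 0 < (deriv v θ) ^ 2 + (deriv τ θ) ^ 2)
    (hslope : ∀ θ ∈ I, deriv vtil θ = Real.sqrt ((deriv v θ) ^ 2 + (deriv τ θ) ^ 2))
    (Lap : (ℝ → ℝ) → ℝ → ℝ)
    (hLap : ∀ w : ℝ → ℝ, ∀ θ : ℝ,
      Lap w θ = deriv (fun t => ρ t * deriv w t) θ / m θ) :
    ∀ θ ∈ I,
      Lap vtil θ =
          (deriv v θ * Lap v θ + deriv τ θ * Lap τ θ) /
            Real.sqrt ((deriv v θ) ^ 2 + (deriv τ θ) ^ 2) ∧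
        (Lap v θ) ^ 2 + (Lap τ θ) ^ 2 - (Lap vtil θ) ^ 2 =
          (deriv v θ * Lap τ θ - deriv τ θ * Lap v θ) ^ 2 /
            ((deriv v θ) ^ 2 + (deriv τ θ) ^ 2) ∧
        (Lap vtil θ) ^ 2 ≤ (Lap v θ) ^ 2 + (Lap τ θ) ^ 2 :=
  stmt_9_general α β I hI m ρ hρ v τ vtil hv hτ hpos hslope Lap hLap
end
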